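/- The infimum over polynomials p of total degree at most 2 of the supremum over the simplex T^3 of |x_1 x_2 x_3 - p(x)| equals 1/72, and is attained by p(x) = x_1x_2x_3 - R_3(x)/72 where R_3(x) = 72 x_1x_2x_3 - 4e_1 + 4e_1² - 8e_2 + 1. -/

import Mathlib

open MvPolynomial

/-- The standard simplex `T³ = {x ∈ ℝ³ : xᵢ ≥ 0, x₁+x₂+x₃ ≤ 1}`. -/
def simplexT3 : Set (Fin 3 → ℝ) := {x | (∀ i, 0 ≤ x i) ∧ x 0 + x 1 + x 2 ≤ 1}

/-- `R₃` as a polynomial: `72 x₁x₂x₃ - 4e₁ + 4e₁² - 8e₂ + 1`. -/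
noncomputable def R3poly : MvPolynomial (Fin 3) ℝ :=
  C 72 * (X 0 * X 1 * X 2) - C 4 * (X 0 + X 1 + X 2) + C 4 * (X 0 + X 1 + X 2) ^ 2
    - C 8 * (X 0 * X 1 + X 1 * X 2 + X 0 * X 2) + 1

/-- The extremal polynomial `p(x) = x₁x₂x₃ - R₃(x)/72`. -/
noncomputable def pstar : MvPolynomial (Fin 3) ℝ :=
  X 0 * X 1 * X 2 - C (1 / 72) * R3poly

/-!
Lower bound: the functional `L f = f(v₁) + f(v₂) + f(v₃) + 9 f(c) - 4 (f(m₁₂) + f(m₁₃) + f(m₂₃))`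
on the vertices `vᵢ`, the centroid `c` and the edge midpoints `mᵢⱼ` of `T³` vanishes on
polynomials of degree at most 2, equals `1/3` on `x₁x₂x₃` and has norm `1 + 1 + 1 + 9 + 3·4 = 24`
on bounded functions on `T³`; hence every quadratic `p` has `1/3 = |L(x₁x₂x₃ - p)| ≤ 24 ‖x₁x₂x₃ - p‖`.

Upper bound: `x₁x₂x₃ - p*(x) = R₃(x)/72`, and `-1 ≤ R₃ ≤ 1` on `T³`, with `R₃(0) = 1`
(`R₃` equioscillates on the seven nodes of `L`).
-/

theorem isCompact_simplexT3 : IsCompact simplexT3 := by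
  refine (isCompact_Icc (a := (0 : Fin 3 → ℝ)) (b := 1)).of_isClosed_subset ?_ ?_
  · exact isClosed_Ici.inter
      (isClosed_le (by fun_prop : Continuous fun x : Fin 3 → ℝ => x 0 + x 1 + x 2) continuous_const)
  · rintro x ⟨hx, hs⟩
    refine ⟨hx, fun i => ?_⟩
    have := hx 0; have := hx 1; have := hx 2
    fin_cases i <;> simp <;> linarith

noncomputable def approxError (p : MvPolynomial (Fin 3) ℝ) : ℝ :=
  sSup ((fun x => |x 0 * x 1 * x 2 - eval x p|) '' simplexT3)

theorem le_approxError (p : MvPolynomial (Fin 3) ℝ) {x : Fin 3 → ℝ} (hx : x ∈ simplexT3) :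
    |x 0 * x 1 * x 2 - eval x p| ≤ approxError p := by
  refine le_csSup (isCompact_simplexT3.bddAbove_image (Continuous.continuousOn ?_)) ⟨x, hx, rfl⟩
  exact (by fun_prop : Continuous fun x : Fin 3 → ℝ => x 0 * x 1 * x 2).sub (continuous_eval p)
    |>.abs

noncomputable def simplexT3Node : Fin 7 → Fin 3 → ℝ :=
  ![![1, 0, 0], ![0, 1, 0], ![0, 0, 1], ![1/3, 1/3, 1/3],
    ![1/2, 1/2, 0], ![1/2, 0, 1/2], ![0, 1/2, 1/2]]

noncomputable def simplexT3Weight : Fin 7 → ℝ := ![1, 1, 1, 9, -4, -4, -4]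

theorem simplexT3Node_mem (i : Fin 7) : simplexT3Node i ∈ simplexT3 := by
  refine ⟨fun j => ?_, ?_⟩ <;> fin_cases i <;> try fin_cases j
  all_goals simp [simplexT3Node] <;> norm_num

noncomputable def simplexT3Functional : ((Fin 3 → ℝ) → ℝ) →ₗ[ℝ] ℝ where
  toFun f := ∑ i, simplexT3Weight i * f (simplexT3Node i)
  map_add' f g := by simp only [Pi.add_apply, mul_add, Finset.sum_add_distrib]
  map_smul' r f := by
    simp only [Pi.smul_apply, smul_eq_mul, RingHom.id_apply, Finset.mul_sum, mul_left_comm]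

theorem simplexT3Functional_apply (f : (Fin 3 → ℝ) → ℝ) :
    simplexT3Functional f = ∑ i, simplexT3Weight i * f (simplexT3Node i) := rfl

theorem simplexT3Functional_monomial {a b c : ℕ} (h : a + b + c ≤ 2) :
    simplexT3Functional (fun x => x 0 ^ a * x 1 ^ b * x 2 ^ c) = 0 := by
  have : a ≤ 2 := by omega
  have : b ≤ 2 := by omega
  have : c ≤ 2 := by omega
  interval_cases a <;> interval_cases b <;> interval_cases c <;> first
    | omega
    | (simp [simplexT3Functional_apply, Fin.sum_univ_succ, simplexT3Weight, simplexT3Node]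
       norm_num)

theorem simplexT3Functional_eval_eq_zero {p : MvPolynomial (Fin 3) ℝ} (hp : p.totalDegree ≤ 2) :
    simplexT3Functional (fun x => eval x p) = 0 := by
  have hsum : (fun x => eval x p) = ∑ m ∈ p.support,
      coeff m p • fun x : Fin 3 → ℝ => x 0 ^ m 0 * x 1 ^ m 1 * x 2 ^ m 2 := by
    ext x
    simp [eval_eq', Fin.prod_univ_three, mul_assoc]
  rw [hsum, map_sum]
  refine Finset.sum_eq_zero fun m hm => ?_
  have hm : m 0 + m 1 + m 2 ≤ 2 := by
    have h := (le_totalDegree hm).trans hp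
    rwa [Finsupp.sum_fintype _ _ fun _ => rfl, Fin.sum_univ_three] at h
  rw [map_smul, simplexT3Functional_monomial hm, smul_zero]

theorem simplexT3Functional_mul_mul :
    simplexT3Functional (fun x => x 0 * x 1 * x 2) = 1 / 3 := by
  simp [simplexT3Functional_apply, Fin.sum_univ_succ, simplexT3Weight, simplexT3Node]
  norm_num

theorem abs_simplexT3Functional_le {f : (Fin 3 → ℝ) → ℝ} {M : ℝ}
    (hf : ∀ x ∈ simplexT3, |f x| ≤ M) : |simplexT3Functional f| ≤ 24 * M :=
  calc |simplexT3Functional f| ≤ ∑ i, |simplexT3Weight i| * M := by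
        rw [simplexT3Functional_apply]
        refine (Finset.abs_sum_le_sum_abs _ _).trans (Finset.sum_le_sum fun i _ => ?_)
        rw [abs_mul]
        exact mul_le_mul_of_nonneg_left (hf _ (simplexT3Node_mem i)) (abs_nonneg _)
    _ = 24 * M := by
        norm_num [Fin.sum_univ_succ, simplexT3Weight]
        ring

theorem one_div_72_le_approxError {p : MvPolynomial (Fin 3) ℝ} (hp : p.totalDegree ≤ 2) :
    1 / 72 ≤ approxError p := by
  have h := abs_simplexT3Functional_le fun x hx => le_approxError p hx
  rw [show (fun x : Fin 3 → ℝ => x 0 * x 1 * x 2 - eval x p)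
      = (fun x => x 0 * x 1 * x 2) - fun x => eval x p from rfl, map_sub,
    simplexT3Functional_mul_mul, simplexT3Functional_eval_eq_zero hp, sub_zero,
    abs_of_pos (by norm_num)] at h
  linarith

theorem eval_R3poly (x : Fin 3 → ℝ) :
    eval x R3poly = 72 * (x 0 * x 1 * x 2) - 4 * (x 0 + x 1 + x 2) + 4 * (x 0 + x 1 + x 2) ^ 2
      - 8 * (x 0 * x 1 + x 1 * x 2 + x 0 * x 2) + 1 := by
  simp [R3poly]

theorem eval_R3poly_le_one {x : Fin 3 → ℝ} (hx : x ∈ simplexT3) : eval x R3poly ≤ 1 := by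
  obtain ⟨h, hs⟩ := hx
  have hs₁ : 0 ≤ 1 - (x 0 + x 1 + x 2) := by linarith
  rw [eval_R3poly]
  -- `9 x₁x₂x₃ ≤ e₁e₂`, so `1 - R₃ ≥ 4 e₁ (1 - e₁) + 8 e₂ (1 - e₁) ≥ 0`
  nlinarith [mul_nonneg (h 0) (sq_nonneg (x 1 - x 2)), mul_nonneg (h 1) (sq_nonneg (x 0 - x 2)),
    mul_nonneg (h 2) (sq_nonneg (x 0 - x 1)),
    mul_nonneg (add_nonneg (add_nonneg (mul_nonneg (h 0) (h 1)) (mul_nonneg (h 1) (h 2)))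
      (mul_nonneg (h 0) (h 2))) hs₁,
    mul_nonneg (add_nonneg (add_nonneg (h 0) (h 1)) (h 2)) hs₁]

theorem neg_one_le_eval_R3poly {x : Fin 3 → ℝ} (hx : ∀ i, 0 ≤ x i) : -1 ≤ eval x R3poly := by
  rw [eval_R3poly]
  -- the coefficient of `x₁x₂` in `R₃` is `72 x₃ - 8`, whose sign decides the argument
  rcases le_or_gt 8 (72 * x 2) with h | h
  · nlinarith [sq_nonneg (2 * x 0 + 2 * x 1 - 1), sq_nonneg (2 * x 2 - 1),
      mul_nonneg (mul_nonneg (hx 0) (hx 1)) (by linarith : (0 : ℝ) ≤ 72 * x 2 - 8)]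
  · have h9 : 0 < 1 + 9 * x 2 := by linarith [hx 2]
    nlinarith [mul_nonneg (mul_nonneg h9.le (by linarith : (0 : ℝ) ≤ 8 - 72 * x 2))
        (sq_nonneg (x 0 - x 1)),
      sq_nonneg ((x 0 + x 1) * (1 + 9 * x 2) - 1), mul_nonneg (hx 2) (sq_nonneg (x 2 - 4 / 9)),
      mul_nonneg (mul_nonneg (hx 0) (hx 1)) (hx 2), hx 2, h9]

theorem sub_eval_pstar (x : Fin 3 → ℝ) :
    x 0 * x 1 * x 2 - eval x pstar = eval x R3poly / 72 := by
  simp only [pstar, map_sub, map_mul, eval_X, eval_C]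
  ring

theorem approxError_pstar : approxError pstar = 1 / 72 := by
  refine IsGreatest.csSup_eq ⟨⟨0, ⟨fun _ => le_rfl, by simp⟩, ?_⟩, ?_⟩
  · dsimp only
    rw [sub_eval_pstar, eval_R3poly]
    norm_num
  · rintro r ⟨x, hx, rfl⟩
    dsimp only
    rw [sub_eval_pstar, abs_div, abs_of_pos (by norm_num : (0 : ℝ) < 72)]
    gcongr
    exact abs_le.mpr ⟨neg_one_le_eval_R3poly hx.1, eval_R3poly_le_one hx⟩

theorem totalDegree_pstar_le : pstar.totalDegree ≤ 2 := by
  have hpstar : pstar = -C (1 / 72) * (-C 4 * (X 0 + X 1 + X 2) + C 4 * (X 0 + X 1 + X 2) ^ 2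
      - C 8 * (X 0 * X 1 + X 1 * X 2 + X 0 * X 2) + 1) := by
    have h : (C (1 / 72) : MvPolynomial (Fin 3) ℝ) * C 72 = 1 := by rw [← C_mul]; norm_num
    rw [pstar, R3poly]
    linear_combination (-(X 0 * X 1 * X 2)) * h
  have hX (i : Fin 3) : (X i : MvPolynomial (Fin 3) ℝ).totalDegree ≤ 1 := (totalDegree_X i).le
  have hXX (i j : Fin 3) : (X i * X j : MvPolynomial (Fin 3) ℝ).totalDegree ≤ 2 :=
    (totalDegree_mul _ _).trans (add_le_add (hX i) (hX j))
  have he₁ : (X 0 + X 1 + X 2 : MvPolynomial (Fin 3) ℝ).totalDegree ≤ 1 :=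
    (totalDegree_add _ _).trans (max_le ((totalDegree_add _ _).trans (max_le (hX 0) (hX 1))) (hX 2))
  have hC (a : ℝ) (q : MvPolynomial (Fin 3) ℝ) : (C a * q).totalDegree ≤ q.totalDegree :=
    (totalDegree_mul _ _).trans (by rw [totalDegree_C, zero_add])
  rw [hpstar, ← C_neg, ← C_neg]
  grw [hC, totalDegree_add, totalDegree_sub, totalDegree_add, hC, hC, hC, totalDegree_pow, he₁,
    totalDegree_add, totalDegree_add, hXX, hXX, hXX, totalDegree_one]
  simp

/-- `E₂(x₁x₂x₃; T³) = 1/72`, attained by `pstar`. -/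
theorem best_approx_eq_T3 :
    sInf {r : ℝ | ∃ p : MvPolynomial (Fin 3) ℝ, p.totalDegree ≤ 2 ∧
        r = sSup ((fun x => |x 0 * x 1 * x 2 - MvPolynomial.eval x p|) '' simplexT3)}
      = 1 / 72 ∧
    pstar.totalDegree ≤ 2 ∧
    sSup ((fun x => |x 0 * x 1 * x 2 - MvPolynomial.eval x pstar|) '' simplexT3) = 1 / 72 := by
  refine ⟨IsLeast.csInf_eq ⟨⟨pstar, totalDegree_pstar_le, approxError_pstar.symm⟩, ?_⟩,
    totalDegree_pstar_le, approxError_pstar⟩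
  rintro r ⟨p, hp, rfl⟩
  exact one_div_72_le_approxError hp
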